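/- arXiv:1908.11575 — 5 statements merged into one kernel-verified Lean document; each statement's English description precedes it below -/
import Mathlib

section
/- Let U ⊆ ℝᵈ be an open set definable by polynomials and let R₁,…,R_k ∈ ℝ[x₁,…,x_d]. Then the open set {x ∈ U : Rᵢ(x) ≠ 0 for i = 1,…,k} has only finitely many connected components. -/
/-!
Let `G` be the product of the nonzero polynomials among those defining `U`. On each connected
component of `{G ≠ 0}` all of them have constant sign, so a component of `{G ≠ 0}` that meets `U`
lies in a single component of `U`; as `{G ≠ 0}` is dense, every component of the open set `U`
contains one. Each component of `{G ≠ 0}` in turn contains a local maximum of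
`G(x)² exp(-|x - a|²)`, which tends to `0` at infinity. At such a point `∂ᵢG = G · (xᵢ - aᵢ)`,
i.e. `(G xᵢ - ∂ᵢG) / G = aᵢ`. The `d + 1` functions `(G Xᵢ - ∂ᵢG) / G` and `Xⱼ` are algebraically
dependent in `ℝ[X][1/G]`, which has transcendence degree `d`; for generic `a` the dependence
relation, specialised at `a`, is a nonzero polynomial in `Xⱼ`. So for such `a` there are only
finitely many critical points, and they meet every component of `U`.
-/

open MvPolynomial Filter Topology
open Function (update)

/-- A set `U ⊆ ℝ^d` is definable by polynomials if membership in `U` is determined by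
the signs of finitely many polynomials. -/
def DefinableByPolynomials {d : ℕ} (U : Set (Fin d → ℝ)) : Prop :=
  ∃ (ℓ : ℕ) (Q : Fin ℓ → MvPolynomial (Fin d) ℝ) (S : Set (Fin ℓ → SignType)),
    U = {x | (fun i => SignType.sign (MvPolynomial.eval x (Q i))) ∈ S}

section Topology

variable {X : Type*} [TopologicalSpace X]

theorem IsPreconnected.sign_eq {W : Set X} (hW : IsPreconnected W) {g : X → ℝ}
    (hg : ContinuousOn g W) (hg0 : ∀ x ∈ W, g x ≠ 0) {x y : X} (hx : x ∈ W) (hy : y ∈ W) :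
    SignType.sign (g x) = SignType.sign (g y) := by
  have no_change : ∀ {x y}, x ∈ W → y ∈ W → g x < 0 → 0 < g y → False := fun hx hy hgx hgy => by
    obtain ⟨w, hw, hw0⟩ := hW.intermediate_value hx hy hg ⟨hgx.le, hgy.le⟩
    exact hg0 w hw hw0
  rcases (hg0 x hx).lt_or_gt with hgx | hgx <;> rcases (hg0 y hy).lt_or_gt with hgy | hgy
  · rw [sign_neg hgx, sign_neg hgy]
  · exact (no_change hx hy hgx hgy).elim
  · exact (no_change hy hx hgy hgx).elim
  · rw [sign_pos hgx, sign_pos hgy]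

theorem mem_connectedComponentIn_of_mem_closure [LocallyConnectedSpace X] {F : Set X}
    (hF : IsOpen F) {x z : X} (hz : z ∈ F) (hcl : z ∈ closure (connectedComponentIn F x)) :
    z ∈ connectedComponentIn F x := by
  obtain ⟨y, hyz, hyx⟩ := mem_closure_iff.mp hcl _ hF.connectedComponentIn
    (mem_connectedComponentIn hz)
  rw [connectedComponentIn_eq hyx, ← connectedComponentIn_eq hyz]
  exact mem_connectedComponentIn hz

theorem Continuous.exists_isLocalMax_mem_connectedComponentIn [LocallyConnectedSpace X]
    {h : X → ℝ} (hc : Continuous h) (hlim : Tendsto h (cocompact X) (𝓝 0)) {x₀ : X}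
    (hx₀ : 0 < h x₀) : ∃ z ∈ connectedComponentIn {x | 0 < h x} x₀, IsLocalMax h z := by
  have hΩ : IsOpen {x | 0 < h x} := isOpen_lt continuous_const hc
  set C := connectedComponentIn {x | 0 < h x} x₀
  have hx₀C : x₀ ∈ C := mem_connectedComponentIn hx₀
  have hfar : ∀ᶠ x in cocompact X ⊓ 𝓟 (closure C), h x ≤ h x₀ :=
    ((hlim.eventually (gt_mem_nhds hx₀)).mono fun _ => le_of_lt).filter_mono inf_le_left
  obtain ⟨z, hzcl, hzmax⟩ :=
    hc.continuousOn.exists_isMaxOn' isClosed_closure (subset_closure hx₀C) hfar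
  have hzC : z ∈ C := mem_connectedComponentIn_of_mem_closure hΩ
    (hx₀.trans_le (hzmax (subset_closure hx₀C))) hzcl
  exact ⟨z, hzC, mem_of_superset (hΩ.connectedComponentIn.mem_nhds hzC)
    fun y hy => hzmax (subset_closure hy)⟩

theorem finite_connectedComponents_of_forall_exists_mem {s F : Set X} (hF : F.Finite)
    (h : ∀ x ∈ s, ∃ z ∈ F, z ∈ connectedComponentIn s x) : Finite (ConnectedComponents s) := by
  have : Finite ↥(F ∩ s) := (hF.inter_of_left s).to_subtype
  refine Finite.of_surjective (fun p : ↥(F ∩ s) => ConnectedComponents.mk ⟨p.1, p.2.2⟩) ?_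
  rintro ⟨x, hx⟩
  obtain ⟨z, hzF, hz⟩ := h x hx
  rw [connectedComponentIn_eq_image hx] at hz
  obtain ⟨w, hw, rfl⟩ := hz
  exact ⟨⟨w, hzF, w.2⟩, ConnectedComponents.coe_eq_coe'.mpr hw⟩

end Topology

theorem norm_sub_le_one_add_sum_sq {σ : Type*} [Fintype σ] (x a : σ → ℝ) :
    ‖x - a‖ ≤ 1 + ∑ i, (x i - a i) ^ 2 := by
  refine (pi_norm_le_iff_of_nonneg (by positivity)).mpr fun i => ?_
  have hi := Finset.single_le_sum (fun k _ => sq_nonneg (x k - a k)) (Finset.mem_univ i)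
  rw [Pi.sub_apply, Real.norm_eq_abs]
  nlinarith [abs_nonneg (x i - a i), sq_abs (x i - a i)]

namespace MvPolynomial

theorem dense_setOf_eval_ne_zero {σ : Type*} [Fintype σ] {p : MvPolynomial σ ℝ} (hp : p ≠ 0) :
    Dense {x : σ → ℝ | eval x p ≠ 0} := by
  refine dense_iff_inter_open.mpr fun s hs ⟨x, hx⟩ => ?_
  obtain ⟨ε, hε, hball⟩ := Metric.isOpen_iff.mp hs x hx
  by_contra! hzero
  refine hp (funext_set (fun i => Set.Ioo (x i - ε) (x i + ε))
    (fun i => Set.Ioo_infinite (by linarith)) fun y hy => ?_)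
  have hy : y ∈ Metric.ball x ε := by
    rw [ball_pi x hε]
    simpa [Real.ball_eq_Ioo] using hy
  rw [map_zero]
  by_contra hne
  exact Set.eq_empty_iff_forall_notMem.mp hzero y ⟨hball hy, hne⟩

theorem sign_eval_eq_of_mem_connectedComponentIn {σ ι : Type*} [DecidableEq σ] [Fintype ι]
    (Q : ι → MvPolynomial σ ℝ) {x y : σ → ℝ}
    (hy : y ∈ connectedComponentIn {z | eval z (∏ j with Q j ≠ 0, Q j) ≠ 0} x) (j : ι) :
    SignType.sign (eval y (Q j)) = SignType.sign (eval x (Q j)) := by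
  by_cases hQj : Q j = 0
  · simp [hQj]
  have hx := connectedComponentIn_nonempty_iff.mp ⟨y, hy⟩
  refine isPreconnected_connectedComponentIn.sign_eq (continuous_eval _).continuousOn
    (fun w hw => ?_) hy (mem_connectedComponentIn hx)
  have hw := connectedComponentIn_subset _ _ hw
  rw [Set.mem_ofPred_eq, map_prod] at hw
  exact Finset.prod_ne_zero_iff.mp hw j (Finset.mem_filter.mpr ⟨Finset.mem_univ j, hQj⟩)

theorem exists_abs_eval_le {σ : Type*} [Fintype σ] (p : MvPolynomial σ ℝ) :
    ∃ C ≥ 0, ∃ N : ℕ, ∀ x, |eval x p| ≤ C * (1 + ‖x‖) ^ N := by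
  induction p using MvPolynomial.induction_on with
  | C c => exact ⟨|c|, abs_nonneg c, 0, fun x => by simp⟩
  | add p q hp hq =>
    obtain ⟨C₁, hC₁, N₁, h₁⟩ := hp
    obtain ⟨C₂, hC₂, N₂, h₂⟩ := hq
    refine ⟨C₁ + C₂, by positivity, N₁ + N₂, fun x => ?_⟩
    have h1 : 1 ≤ 1 + ‖x‖ := le_add_of_nonneg_right (norm_nonneg x)
    calc |eval x (p + q)| ≤ C₁ * (1 + ‖x‖) ^ N₁ + C₂ * (1 + ‖x‖) ^ N₂ := by
          rw [map_add]; exact (abs_add_le _ _).trans (add_le_add (h₁ x) (h₂ x))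
      _ ≤ (C₁ + C₂) * (1 + ‖x‖) ^ (N₁ + N₂) := by
        rw [add_mul]
        gcongr <;> first | exact h1 | omega
  | mul_X p j hp =>
    obtain ⟨C, hC, N, h⟩ := hp
    refine ⟨C, hC, N + 1, fun x => ?_⟩
    have hj : |x j| ≤ 1 + ‖x‖ := (norm_le_pi_norm x j).trans (le_add_of_nonneg_left zero_le_one)
    rw [map_mul, eval_X, abs_mul, pow_succ, ← mul_assoc]
    exact mul_le_mul (h x) hj (abs_nonneg _) (by positivity)

theorem hasDerivAt_eval_update {σ : Type*} [DecidableEq σ] (p : MvPolynomial σ ℝ) (z : σ → ℝ)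
    (i : σ) (t : ℝ) :
    HasDerivAt (fun s => eval (update z i s) p) (eval (update z i t) (pderiv i p)) t := by
  induction p using MvPolynomial.induction_on with
  | C c => simpa using hasDerivAt_const t c
  | add p q hp hq => simpa using hp.fun_add hq
  | mul_X p j hp =>
    have hj : HasDerivAt (fun s => update z i s j) ((Pi.single i 1 : σ → ℝ) j) t :=
      hasDerivAt_pi.mp (hasDerivAt_update z i t) j
    simp only [map_mul, eval_X]
    refine (hp.fun_mul hj).congr_deriv ?_
    simp [Derivation.leibniz, pderiv_X, Pi.single_apply, apply_ite (eval _)]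
    ring

section WeightedSq

variable {σ : Type*} [Fintype σ]

noncomputable def weightedSq (f : MvPolynomial σ ℝ) (a x : σ → ℝ) : ℝ :=
  eval x f ^ 2 * Real.exp (-∑ i, (x i - a i) ^ 2)

/-- The critical points of `weightedSq f a` off the zero set of `f`, where the gradient of
`weightedSq f a` is `2 f e^{-|x-a|²} (∇f - f · (x - a))`. -/
def weightedSqCriticalSet (f : MvPolynomial σ ℝ) (a : σ → ℝ) : Set (σ → ℝ) :=
  {x | eval x f ≠ 0 ∧ ∀ i, eval x (pderiv i f) = eval x f * (x i - a i)}

theorem continuous_weightedSq (f : MvPolynomial σ ℝ) (a : σ → ℝ) :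
    Continuous (weightedSq f a) :=
  ((continuous_eval f).pow 2).mul (by fun_prop)

theorem weightedSq_pos_iff {f : MvPolynomial σ ℝ} {a x : σ → ℝ} :
    0 < weightedSq f a x ↔ eval x f ≠ 0 := by
  simp [weightedSq, mul_pos_iff_of_pos_right (Real.exp_pos _), sq_pos_iff]

theorem tendsto_weightedSq_cocompact (f : MvPolynomial σ ℝ) (a : σ → ℝ) :
    Tendsto (weightedSq f a) (cocompact _) (𝓝 0) := by
  obtain ⟨C, -, N, hC⟩ := f.exists_abs_eval_le
  have hlim : Tendsto (fun x : σ → ℝ => C ^ 2 * Real.exp (‖a‖ + 2) *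
      ((1 + ‖x‖) ^ (2 * N) * Real.exp (-(1 + ‖x‖)))) (cocompact _) (𝓝 0) := by
    simpa using ((Real.tendsto_pow_mul_exp_neg_atTop_nhds_zero (2 * N)).comp
      (tendsto_atTop_add_const_left _ 1 tendsto_norm_cocompact_atTop)).const_mul
      (C ^ 2 * Real.exp (‖a‖ + 2))
  refine squeeze_zero (fun x => by unfold weightedSq; positivity) (fun x => ?_) hlim
  have hexp : -∑ i, (x i - a i) ^ 2 ≤ ‖a‖ + 2 + -(1 + ‖x‖) := by
    linarith [norm_sub_le_one_add_sum_sq x a, norm_sub_norm_le x a]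
  calc weightedSq f a x ≤ (C * (1 + ‖x‖) ^ N) ^ 2 * Real.exp (‖a‖ + 2 + -(1 + ‖x‖)) :=
        mul_le_mul (sq_le_sq' (abs_le.mp (hC x)).1 (abs_le.mp (hC x)).2)
          (Real.exp_le_exp.mpr hexp) (by positivity) (by positivity)
    _ = _ := by rw [Real.exp_add]; ring

theorem hasDerivAt_weightedSq_update [DecidableEq σ] (f : MvPolynomial σ ℝ) (a z : σ → ℝ)
    (i : σ) :
    HasDerivAt (fun t => weightedSq f a (update z i t))
      (2 * eval z f * (eval z (pderiv i f) - eval z f * (z i - a i)) *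
        Real.exp (-∑ k, (z k - a k) ^ 2)) (z i) := by
  have hsq (k : σ) : HasDerivAt (fun t => (update z i t k - a k) ^ 2)
      (2 * (z k - a k) * (Pi.single i 1 : σ → ℝ) k) (z i) := by
    simpa using ((hasDerivAt_pi.mp (hasDerivAt_update z i (z i)) k).sub_const (a k)).fun_pow 2
  refine (((hasDerivAt_eval_update f z i (z i)).fun_pow 2).fun_mul
    (HasDerivAt.fun_sum (u := Finset.univ) fun k _ => hsq k).fun_neg.exp).congr_deriv ?_
  simp [Pi.single_apply]
  ring

theorem mem_weightedSqCriticalSet_of_isLocalMax {f : MvPolynomial σ ℝ} {a z : σ → ℝ}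
    (hmax : IsLocalMax (weightedSq f a) z) (hz : eval z f ≠ 0) :
    z ∈ weightedSqCriticalSet f a := by
  classical
  refine ⟨hz, fun i => ?_⟩
  have hz' : IsLocalMax (weightedSq f a) (update z i (z i)) := by rwa [Function.update_eq_self]
  have hline : IsLocalMax (fun t => weightedSq f a (update z i t)) (z i) :=
    hz'.comp_continuous (continuous_const.update i continuous_id).continuousAt
  have := hline.hasDerivAt_eq_zero (hasDerivAt_weightedSq_update f a z i)
  simpa [hz, Real.exp_ne_zero, sub_eq_zero] using this

theorem exists_mem_weightedSqCriticalSet_mem_connectedComponentIn (f : MvPolynomial σ ℝ)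
    (a : σ → ℝ) {x₀ : σ → ℝ} (hx₀ : eval x₀ f ≠ 0) :
    ∃ z ∈ connectedComponentIn {x | eval x f ≠ 0} x₀, z ∈ weightedSqCriticalSet f a := by
  have hΩ : {x | 0 < weightedSq f a x} = {x | eval x f ≠ 0} :=
    Set.ext fun _ => weightedSq_pos_iff
  obtain ⟨z, hzC, hzmax⟩ := (continuous_weightedSq f a).exists_isLocalMax_mem_connectedComponentIn
    (tendsto_weightedSq_cocompact f a) (weightedSq_pos_iff.mpr hx₀)
  rw [hΩ] at hzC
  exact ⟨z, hzC, mem_weightedSqCriticalSet_of_isLocalMax hzmax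
    (connectedComponentIn_subset _ _ hzC)⟩

end WeightedSq

theorem not_algebraicIndependent_localizationAway {K σ ι : Type*} [Field K] [Finite σ]
    [Finite ι] {f : MvPolynomial σ K} (hf : f ≠ 0) (hcard : Nat.card σ < Nat.card ι)
    (v : ι → Localization.Away f) : ¬ AlgebraicIndependent K v := by
  intro hv
  have : FaithfulSMul (MvPolynomial σ K) (Localization.Away f) :=
    (faithfulSMul_iff_algebraMap_injective _ _).mpr
      (IsLocalization.injective _ (powers_le_nonZeroDivisors_of_noZeroDivisors hf))
  have := IsLocalization.isAlgebraic (Localization.Away f) (Submonoid.powers f)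
  have htr := hv.lift_cardinalMk_le_trdeg
  rw [← trdeg_add_eq K (MvPolynomial σ K), trdeg_eq_zero (R := MvPolynomial σ K), add_zero,
    trdeg_of_isDomain] at htr
  simp only [Cardinal.lift_lift] at htr
  rw [← Nat.cast_card, ← Nat.cast_card, Cardinal.lift_natCast, Cardinal.lift_natCast,
    Nat.cast_le] at htr
  omega

noncomputable def evalAway {σ : Type*} {f : MvPolynomial σ ℝ} (x : σ → ℝ) (hx : eval x f ≠ 0) :
    Localization.Away f →ₐ[ℝ] ℝ :=
  IsLocalization.liftAlgHom (M := Submonoid.powers f) (f := aeval x) <| by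
    rintro ⟨_, n, rfl⟩
    simpa using (IsUnit.mk0 _ hx).pow n

theorem exists_forall_map_eval_finSuccEquiv_ne_zero {d : ℕ} {ι : Type*} [Fintype ι]
    {P : ι → MvPolynomial (Fin (d + 1)) ℝ} (hP : ∀ j, P j ≠ 0) :
    ∃ a : Fin d → ℝ, ∀ j, (finSuccEquiv ℝ d (P j)).map (eval a) ≠ 0 := by
  let c (j : ι) := (finSuccEquiv ℝ d (P j)).leadingCoeff
  have hc : ∏ j, c j ≠ 0 := Finset.prod_ne_zero_iff.mpr fun j _ =>
    Polynomial.leadingCoeff_ne_zero.mpr ((finSuccEquiv ℝ d).map_ne_zero_iff.mpr (hP j))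
  obtain ⟨a, ha⟩ := (dense_setOf_eval_ne_zero hc).nonempty
  refine ⟨a, fun j hzero => ?_⟩
  rw [Set.mem_ofPred_eq, map_prod] at ha
  apply Finset.prod_ne_zero_iff.mp ha j (Finset.mem_univ j)
  rw [show c j = _ from Polynomial.coeff_natDegree.symm, ← Polynomial.coeff_map, hzero,
    Polynomial.coeff_zero]

theorem exists_finite_weightedSqCriticalSet {d : ℕ} {f : MvPolynomial (Fin d) ℝ} (hf : f ≠ 0) :
    ∃ a, (weightedSqCriticalSet f a).Finite := by
  let v (j : Fin d) : Fin (d + 1) → Localization.Away f :=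
    Fin.cons (algebraMap (MvPolynomial (Fin d) ℝ) _ (X j)) fun i =>
      IsLocalization.mk' _ (f * X i - pderiv i f) (⟨f, Submonoid.mem_powers f⟩ : Submonoid.powers f)
  have hdep (j : Fin d) : ∃ P : MvPolynomial (Fin (d + 1)) ℝ, P ≠ 0 ∧ aeval (v j) P = 0 := by
    have := not_algebraicIndependent_localizationAway hf (by simp) (v j)
    rw [algebraicIndependent_iff] at this
    push Not at this
    exact this.imp fun P h => h.symm
  choose P hP0 hPv using hdep
  obtain ⟨a, hq⟩ := exists_forall_map_eval_finSuccEquiv_ne_zero hP0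
  refine ⟨a, (Set.Finite.pi fun j => Polynomial.finite_setOfPred_isRoot (hq j)).subset ?_⟩
  rintro x ⟨hx0, hx⟩ j -
  have hv : evalAway x hx0 ∘ v j = Fin.cons (x j) a := by
    ext i
    induction i using Fin.cases with
    | zero => exact (IsLocalization.lift_eq _ _).trans (aeval_X x j)
    | succ k =>
      simp only [Function.comp_apply, v, Fin.cons_succ, evalAway,
        IsLocalization.liftAlgHom_apply]
      rw [IsLocalization.lift_mk'_spec]
      simp [hx k]
      ring
  have := congrArg (evalAway x hx0) (hPv j)
  rwa [map_zero, comp_aeval_apply, ← Function.comp_def, hv, aeval_eq_eval,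
    eval_eq_eval_mv_eval'] at this

end MvPolynomial

theorem DefinableByPolynomials.finite_connectedComponents {d : ℕ} {U : Set (Fin d → ℝ)}
    (hUopen : IsOpen U) (hU : DefinableByPolynomials U) : Finite (ConnectedComponents U) := by
  obtain ⟨ℓ, Q, S, rfl⟩ := hU
  set G := ∏ j with Q j ≠ 0, Q j
  have hG : G ≠ 0 := Finset.prod_ne_zero_iff.mpr fun j hj => (Finset.mem_filter.mp hj).2
  obtain ⟨a, ha⟩ := exists_finite_weightedSqCriticalSet hG
  refine finite_connectedComponents_of_forall_exists_mem ha fun x hx => ?_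
  obtain ⟨x₁, hx₁C, hx₁G⟩ := (dense_setOf_eval_ne_zero hG).inter_open_nonempty _
    hUopen.connectedComponentIn ⟨x, mem_connectedComponentIn hx⟩
  have hx₁U := connectedComponentIn_subset _ _ hx₁C
  obtain ⟨z, hzW, hz⟩ := exists_mem_weightedSqCriticalSet_mem_connectedComponentIn G a hx₁G
  have hWU : connectedComponentIn {y | eval y G ≠ 0} x₁ ⊆
      {y | (fun i => SignType.sign (eval y (Q i))) ∈ S} := fun y hy => by
    rw [Set.mem_ofPred_eq, funext (sign_eval_eq_of_mem_connectedComponentIn Q hy)]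
    exact hx₁U
  refine ⟨z, hz, ?_⟩
  rw [connectedComponentIn_eq hx₁C]
  exact isPreconnected_connectedComponentIn.subset_connectedComponentIn
    (mem_connectedComponentIn hx₁G) hWU hzW

theorem DefinableByPolynomials.setOf_mem_and_eval_ne_zero {d k : ℕ} {U : Set (Fin d → ℝ)}
    (hU : DefinableByPolynomials U) (R : Fin k → MvPolynomial (Fin d) ℝ) :
    DefinableByPolynomials {x | x ∈ U ∧ ∀ i, eval x (R i) ≠ 0} := by
  obtain ⟨ℓ, Q, S, rfl⟩ := hU
  refine ⟨ℓ + k, Fin.append Q R,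
    {s | (fun j => s (Fin.castAdd k j)) ∈ S ∧ ∀ i, s (Fin.natAdd ℓ i) ≠ 0}, ?_⟩
  ext x
  simp [Fin.append_left, Fin.append_right]

/-- **Fact 3.7.** If `U ⊆ ℝ^d` is an open set definable by polynomials and
`R₁,…,R_k` are real polynomials, then the open set
`{x ∈ U : Rᵢ(x) ≠ 0 for all i}` has only finitely many connected components. -/
theorem finitely_many_components (d k : ℕ) (U : Set (Fin d → ℝ))
    (hUopen : IsOpen U) (hUdef : DefinableByPolynomials U)
    (R : Fin k → MvPolynomial (Fin d) ℝ) :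
    Finite (ConnectedComponents
      {x : Fin d → ℝ | x ∈ U ∧ ∀ i, MvPolynomial.eval x (R i) ≠ 0}) := by
  have hopen : IsOpen {x : Fin d → ℝ | x ∈ U ∧ ∀ i, eval x (R i) ≠ 0} := by
    simp only [Set.ofPred_and, Set.ofPred_mem_eq, Set.ofPred_forall]
    exact hUopen.inter (isOpen_iInter_of_finite fun i =>
      isOpen_ne_fun (continuous_eval _) continuous_const)
  exact DefinableByPolynomials.finite_connectedComponents hopen
    (hUdef.setOf_mem_and_eval_ne_zero R)
end

section
/- Let p₁, p₂, p₃, p₄, q, r' be real numbers with q > 0 and p₄ > 0, and let X₁, X₂ ∈ ℝ³ be given by X_{1,2} = (1/q)·(p₁ ± √(p₄/q)·u₁, p₂ ∓ √(p₄/q)·u₂, p₃ ± √(p₄/q)·u₃) for a fixed vector u = (u₁,u₂,u₃) ∈ ℝ³, and a point c' ∈ ℝ³. Then exactly one of ‖X₁ − c'‖² − r'² and ‖X₂ − c'‖² − r'² is negative and the other is positive if and only if 4·p₄·q·((p₁ − q·c'₁)·u₁ − (p₂ − q·c'₂)·u₂ + (p₃ − q·c'₃)·u₃)² > (q·(p₁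 − q·c'₁)² + p₄·u₁² + q·(p₂ − q·c'₂)² + p₄·u₂² + q·(p₃ − q·c'₃)² + p₄·u₃² − q³·r'²)². -/
/-!
Write `a = p / q - c'` and `w = (u₁, -u₂, u₃)`, so that `X₁,₂ - c' = a ± t • w` with
`t = √(p₄ / q) / q`. Expanding both norms, `A₁` and `A₂` are `N ± 2t⟪a, w⟫` with
`N = ‖a‖² + t²‖w‖² - r'²`, hence `A₁ A₂ = N² - 4t²⟪a, w⟫²`, and since `t² = p₄ / q³` this
is `q⁻⁶` times the difference of the two sides of the inequality. The points lie on opposite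
sides of the sphere exactly when `A₁ A₂ < 0`.
-/

open scoped RealInnerProductSpace

lemma opposite_signs_iff_mul_neg {R : Type*} [Ring R] [LinearOrder R] [IsStrictOrderedRing R]
    {a b : R} : (a < 0 ∧ 0 < b) ∨ (b < 0 ∧ 0 < a) ↔ a * b < 0 := by
  rw [mul_neg_iff]
  tauto

lemma norm_add_smul_sq_sub_mul_norm_sub_smul_sq_sub {F : Type*} [NormedAddCommGroup F]
    [InnerProductSpace ℝ F] (a w : F) (t ρ : ℝ) :
    (‖a + t • w‖ ^ 2 - ρ) * (‖a - t • w‖ ^ 2 - ρ) =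
      (‖a‖ ^ 2 + t ^ 2 * ‖w‖ ^ 2 - ρ) ^ 2 - 4 * t ^ 2 * ⟪a, w⟫ ^ 2 := by
  rw [norm_add_sq_real, norm_sub_sq_real, norm_smul, inner_smul_right, Real.norm_eq_abs, mul_pow,
    sq_abs]
  ring

lemma EuclideanSpace.norm_sq_vec3 (x₁ x₂ x₃ : ℝ) :
    ‖!₂[x₁, x₂, x₃]‖ ^ 2 = x₁ ^ 2 + x₂ ^ 2 + x₃ ^ 2 := by
  simp [EuclideanSpace.real_norm_sq_eq, Fin.sum_univ_three]

lemma EuclideanSpace.inner_vec3 (x₁ x₂ x₃ y₁ y₂ y₃ : ℝ) :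
    ⟪!₂[x₁, x₂, x₃], !₂[y₁, y₂, y₃]⟫ = x₁ * y₁ + x₂ * y₂ + x₃ * y₃ := by
  simp [PiLp.inner_apply, Fin.sum_univ_three, mul_comm]

lemma EuclideanSpace.vec3_add_smul (x₁ x₂ x₃ y₁ y₂ y₃ t : ℝ) :
    !₂[x₁, x₂, x₃] + t • !₂[y₁, y₂, y₃] = !₂[x₁ + t * y₁, x₂ + t * y₂, x₃ + t * y₃] := by
  simp [← WithLp.toLp_smul, ← WithLp.toLp_add]

lemma EuclideanSpace.vec3_sub_smul (x₁ x₂ x₃ y₁ y₂ y₃ t : ℝ) :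
    !₂[x₁, x₂, x₃] - t • !₂[y₁, y₂, y₃] = !₂[x₁ - t * y₁, x₂ - t * y₂, x₃ - t * y₃] := by
  simp [← WithLp.toLp_smul, ← WithLp.toLp_sub]

/-- **Linking condition as a polynomial inequality** (Appendix A.2). Let `q > 0`,
`p₄ > 0`, and let `X₁, X₂ ∈ ℝ³` be given by
`X_{1,2} = (1/q)·(p₁ ± √(p₄/q)·u₁, p₂ ∓ √(p₄/q)·u₂, p₃ ± √(p₄/q)·u₃)`.
Then exactly one of `‖X₁ - c'‖² - r'²` and `‖X₂ - c'‖² - r'²` is negative and the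
other positive if and only if
`4·p₄·q·((p₁-q·c'₁)u₁ - (p₂-q·c'₂)u₂ + (p₃-q·c'₃)u₃)² >`
`(q(p₁-q·c'₁)² + p₄u₁² + q(p₂-q·c'₂)² + p₄u₂² + q(p₃-q·c'₃)² + p₄u₃² - q³r'²)²`. -/
theorem linking_polynomial_inequality
    (p₁ p₂ p₃ p₄ q r' u₁ u₂ u₃ c₁ c₂ c₃ : ℝ) (hq : 0 < q) (hp₄ : 0 < p₄) :
    (let s := Real.sqrt (p₄ / q)
     let A₁ := ((p₁ + s * u₁) / q - c₁) ^ 2 + ((p₂ - s * u₂) / q - c₂) ^ 2 +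
       ((p₃ + s * u₃) / q - c₃) ^ 2 - r' ^ 2
     let A₂ := ((p₁ - s * u₁) / q - c₁) ^ 2 + ((p₂ + s * u₂) / q - c₂) ^ 2 +
       ((p₃ - s * u₃) / q - c₃) ^ 2 - r' ^ 2
     (A₁ < 0 ∧ 0 < A₂) ∨ (A₂ < 0 ∧ 0 < A₁)) ↔
    4 * p₄ * q * ((p₁ - q * c₁) * u₁ - (p₂ - q * c₂) * u₂ + (p₃ - q * c₃) * u₃) ^ 2 >
      (q * (p₁ - q * c₁) ^ 2 + p₄ * u₁ ^ 2 + q * (p₂ - q * c₂) ^ 2 + p₄ * u₂ ^ 2 +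
        q * (p₃ - q * c₃) ^ 2 + p₄ * u₃ ^ 2 - q ^ 3 * r' ^ 2) ^ 2 := by
  dsimp only
  set s := Real.sqrt (p₄ / q)
  have hs : s ^ 2 = p₄ / q := Real.sq_sqrt (div_nonneg hp₄.le hq.le)
  set a : EuclideanSpace ℝ (Fin 3) := !₂[p₁ / q - c₁, p₂ / q - c₂, p₃ / q - c₃]
  set w : EuclideanSpace ℝ (Fin 3) := !₂[u₁, -u₂, u₃]
  have hA₁ : ((p₁ + s * u₁) / q - c₁) ^ 2 + ((p₂ - s * u₂) / q - c₂) ^ 2 +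
      ((p₃ + s * u₃) / q - c₃) ^ 2 - r' ^ 2 = ‖a + (s / q) • w‖ ^ 2 - r' ^ 2 := by
    rw [EuclideanSpace.vec3_add_smul, EuclideanSpace.norm_sq_vec3]
    ring
  have hA₂ : ((p₁ - s * u₁) / q - c₁) ^ 2 + ((p₂ + s * u₂) / q - c₂) ^ 2 +
      ((p₃ - s * u₃) / q - c₃) ^ 2 - r' ^ 2 = ‖a - (s / q) • w‖ ^ 2 - r' ^ 2 := by
    rw [EuclideanSpace.vec3_sub_smul, EuclideanSpace.norm_sq_vec3]
    ring
  have hscaled : q ^ 6 * ((‖a + (s / q) • w‖ ^ 2 - r' ^ 2) * (‖a - (s / q) • w‖ ^ 2 - r' ^ 2)) =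
      (q * (p₁ - q * c₁) ^ 2 + p₄ * u₁ ^ 2 + q * (p₂ - q * c₂) ^ 2 + p₄ * u₂ ^ 2 +
        q * (p₃ - q * c₃) ^ 2 + p₄ * u₃ ^ 2 - q ^ 3 * r' ^ 2) ^ 2 -
      4 * p₄ * q * ((p₁ - q * c₁) * u₁ - (p₂ - q * c₂) * u₂ + (p₃ - q * c₃) * u₃) ^ 2 := by
    rw [norm_add_smul_sq_sub_mul_norm_sub_smul_sq_sub, div_pow, hs,
      EuclideanSpace.norm_sq_vec3, EuclideanSpace.norm_sq_vec3, EuclideanSpace.inner_vec3]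
    field_simp
    ring
  rw [hA₁, hA₂, opposite_signs_iff_mul_neg, ← mul_lt_mul_iff_right₀ (pow_pos hq 6), mul_zero, hscaled,
    sub_neg]
end

section
/- For every d ≥ 1, the number of partial orders on {1,…,n} of order dimension at most d is at most n^{(d+o(1))n} and at least n^{(d−o(1))n}; that is, it equals n^{(d+o(1))n} as n → ∞. -/
/-- A relation `r` on `{1,…,n}` has order dimension at most `d` if it is realized by
points `a₁,…,aₙ ∈ ℝ^d` whose coordinates are pairwise distinct in every direction,
with `r i j` (for `i ≠ j`) holding iff `aᵢ ≤ aⱼ` coordinatewise. -/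
def HasOrderDimLE (d n : ℕ) (r : Fin n → Fin n → Prop) : Prop :=
  ∃ a : Fin n → Fin d → ℝ,
    (∀ i j, i ≠ j → ∀ l, a i l ≠ a j l) ∧
    (∀ i j, i ≠ j → (r i j ↔ ∀ l, a i l ≤ a j l))

/-- The number of partial orders on `{1,…,n}` of order dimension at most `d`. -/
noncomputable def numPosetsDimLE (d n : ℕ) : ℕ :=
  Nat.card {r : Fin n → Fin n → Prop | IsPartialOrder (Fin n) r ∧ HasOrderDimLE d n r}

/-!
For the upper bound, every coordinate of a realizer may be replaced by the rank of each point in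
that coordinate, so a poset of dimension at most `d` is the pullback of the product order along
some map `Fin n → Fin d → Fin n`; there are `n ^ (d n)` of these.

For the lower bound, place `k` bottom points on each of the `d` axes and `m = n - d k` top
points. The bottom points below a top point determine a vector in `{0, …, k-1}^d`, and these
vectors can be chosen freely, which gives `k ^ (d m)` distinct posets. Taking `k` a small fixed
fraction of `n` makes `m ≈ n` and `k ≥ n ^ (1 - β)` for any fixed `β > 0` and large `n`, so this is
`n ^ ((d - ε) n)`.
-/

open Finset Filter

section Rank

variable {α β : Type*} [Fintype α] [LinearOrder β]

def rankBy (f : α → β) (i : α) : ℕ := #{x | f x < f i}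

lemma rankBy_lt_card (f : α → β) (i : α) : rankBy f i < Fintype.card α :=
  card_lt_univ_of_notMem (x := i) (by simp)

lemma rankBy_mono {f : α → β} {i j : α} (h : f i ≤ f j) : rankBy f i ≤ rankBy f j :=
  card_le_card <| monotone_filter_right _ fun _ _ hx => hx.trans_le h

lemma rankBy_lt_rankBy {f : α → β} {i j : α} (h : f i < f j) : rankBy f i < rankBy f j :=
  card_lt_card <| (ssubset_iff_of_subset <| monotone_filter_right _ fun _ _ hx => hx.trans h).2
    ⟨i, by simp [h], by simp⟩

lemma rankBy_le_rankBy_iff {f : α → β} {i j : α} : rankBy f i ≤ rankBy f j ↔ f i ≤ f j :=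
  ⟨fun h => not_lt.1 fun h' => (rankBy_lt_rankBy h').not_ge h, rankBy_mono⟩

end Rank

lemma setOf_isPartialOrder_hasOrderDimLE_subset_range (d n : ℕ) :
    {r | IsPartialOrder (Fin n) r ∧ HasOrderDimLE d n r} ⊆
      Set.range fun (ρ : Fin n → Fin d → Fin n) i j => ρ i ≤ ρ j := by
  rintro r ⟨hr, a, -, ha⟩
  refine ⟨fun i l => ⟨rankBy (a · l) i, by simpa using rankBy_lt_card (a · l) i⟩, ?_⟩
  funext i j
  by_cases hij : i = j
  · subst hij
    simp [hr.refl]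
  · simp [ha i j hij, Pi.le_def, Fin.le_def, rankBy_le_rankBy_iff]

lemma numPosetsDimLE_le (d n : ℕ) : numPosetsDimLE d n ≤ n ^ (n * d) :=
  calc numPosetsDimLE d n
      ≤ Nat.card (Set.range fun (ρ : Fin n → Fin d → Fin n) i j => ρ i ≤ ρ j) :=
        Nat.card_mono (Set.finite_range _) (setOf_isPartialOrder_hasOrderDimLE_subset_range d n)
    _ ≤ Nat.card (Fin n → Fin d → Fin n) := Finite.card_range_le _
    _ = n ^ (n * d) := by simp [pow_mul, mul_comm]

lemma isPartialOrder_and_hasOrderDimLE_pullback {d n : ℕ} (hd : 1 ≤ d)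
    {a : Fin n → Fin d → ℝ} (ha : ∀ i j, i ≠ j → ∀ l, a i l ≠ a j l) :
    IsPartialOrder (Fin n) (fun i j => a i ≤ a j) ∧ HasOrderDimLE d n (fun i j => a i ≤ a j) := by
  have a_inj : Function.Injective a := fun i j hij => by
    by_contra h
    exact ha i j h ⟨0, hd⟩ (congrFun hij _)
  exact ⟨(RelEmbedding.preimage ⟨a, a_inj⟩ (· ≤ ·)).isPartialOrder, a, ha, fun _ _ _ => Pi.le_def⟩

section TieBreak

variable {n d : ℕ} {P : Fin n → Fin d → ℕ} {i j : Fin n} {l : Fin d}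

/-- Scaling by `n` and adding the index separates points with equal `P`-coordinates while keeping
the strict inequalities of `P`. -/
noncomputable def tieBreak (P : Fin n → Fin d → ℕ) (i : Fin n) (l : Fin d) : ℝ :=
  n * P i l + i

lemma tieBreak_lt_tieBreak (h : P i l < P j l) : tieBreak P i l < tieBreak P j l := by
  have hP : (P i l : ℝ) + 1 ≤ P j l := by exact_mod_cast h
  have hi : (i : ℝ) < n := by exact_mod_cast i.isLt
  have hj : (0 : ℝ) ≤ j := j.val.cast_nonneg
  unfold tieBreak
  nlinarith

lemma tieBreak_ne_tieBreak (hij : i ≠ j) (l : Fin d) : tieBreak P i l ≠ tieBreak P j l := by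
  rcases lt_trichotomy (P i l) (P j l) with h | h | h
  · exact (tieBreak_lt_tieBreak h).ne
  · intro heq
    rw [tieBreak, tieBreak, h, add_right_inj, Nat.cast_inj] at heq
    exact hij (Fin.ext heq)
  · exact (tieBreak_lt_tieBreak h).ne'

lemma tieBreak_le_tieBreak_iff (h : P i l ≠ P j l) :
    tieBreak P i l ≤ tieBreak P j l ↔ P i l < P j l :=
  ⟨fun hle => h.lt_or_gt.resolve_right fun hgt => (tieBreak_lt_tieBreak hgt).not_ge hle,
    fun hlt => (tieBreak_lt_tieBreak hlt).le⟩

end TieBreak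

section Gadget

variable {d k m : ℕ} (c : Fin m → Fin d → Fin k)

def gadget : (Fin d × Fin k) ⊕ Fin m → Fin d → ℕ
  | .inl (l, j), t => if t = l then 2 * j + 2 else 0
  | .inr i, t => 2 * c i t + 1

lemma gadget_inl_ne_gadget_inr (l : Fin d) (j : Fin k) (i : Fin m) (t : Fin d) :
    gadget c (.inl (l, j)) t ≠ gadget c (.inr i) t := by
  simp only [gadget]
  split_ifs <;> omega

lemma gadget_inl_lt_gadget_inr_iff (l : Fin d) (j : Fin k) (i : Fin m) :
    (∀ t, gadget c (.inl (l, j)) t < gadget c (.inr i) t) ↔ j < c i l := by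
  refine ⟨fun h => ?_, fun h t => ?_⟩
  · have := h l
    simp only [gadget, if_true] at this
    omega
  simp only [gadget]
  split_ifs with htl
  · subst htl
    omega
  · omega

end Gadget

lemma pow_le_numPosetsDimLE {d : ℕ} (hd : 1 ≤ d) {k m n : ℕ} (h : d * k + m = n) :
    k ^ (d * m) ≤ numPosetsDimLE d n := by
  let e : (Fin d × Fin k) ⊕ Fin m ≃ Fin n :=
    Fintype.equivFinOfCardEq (by simpa using h)
  let a (c : Fin m → Fin d → Fin k) : Fin n → Fin d → ℝ := tieBreak fun x => gadget c (e.symm x)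
  have below_iff (c) (l j i) : a c (e (.inl (l, j))) ≤ a c (e (.inr i)) ↔ j < c i l := by
    rw [Pi.le_def, ← gadget_inl_lt_gadget_inr_iff]
    refine forall_congr' fun t => ?_
    simpa using tieBreak_le_tieBreak_iff (P := fun x => gadget c (e.symm x))
      (i := e (.inl (l, j))) (j := e (.inr i)) (by simpa using gadget_inl_ne_gadget_inr c l j i t)
  let F (c : Fin m → Fin d → Fin k) :
      {r : Fin n → Fin n → Prop | IsPartialOrder (Fin n) r ∧ HasOrderDimLE d n r} :=
    ⟨fun x y => a c x ≤ a c y,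
      isPartialOrder_and_hasOrderDimLE_pullback hd fun _ _ hxy => tieBreak_ne_tieBreak hxy⟩
  have F_inj : Function.Injective F := fun c c' hF => by
    funext i l
    refine eq_of_forall_lt_iff fun j => ?_
    rw [← below_iff, ← below_iff]
    exact iff_of_eq (congrFun (congrFun (congrArg Subtype.val hF) _) _)
  calc k ^ (d * m) = Nat.card (Fin m → Fin d → Fin k) := by simp [pow_mul]
    _ ≤ numPosetsDimLE d n := Nat.card_le_card_of_injective F F_inj

lemma numPosetsDimLE_le_rpow (d : ℕ) {ε : ℝ} (hε : 0 ≤ ε) {n : ℕ} (hn : 1 ≤ n) :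
    (numPosetsDimLE d n : ℝ) ≤ (n : ℝ) ^ (((d : ℝ) + ε) * n) := by
  have hn' : (1 : ℝ) ≤ n := by exact_mod_cast hn
  calc (numPosetsDimLE d n : ℝ) ≤ ((n ^ (n * d) : ℕ) : ℝ) := by
        exact_mod_cast numPosetsDimLE_le d n
    _ = (n : ℝ) ^ ((d : ℝ) * n) := by
        rw [Nat.cast_pow, ← Real.rpow_natCast]
        push_cast
        ring_nf
    _ ≤ (n : ℝ) ^ (((d : ℝ) + ε) * n) :=
        Real.rpow_le_rpow_of_exponent_le hn' (by nlinarith)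

/-- With `k = ⌈β n / d⌉` there are `n - d k ≥ (1 - 2β) n` top points, and `k ≥ n ^ (1 - β)`
because `n ^ β ≥ d / β`. -/
lemma rpow_le_numPosetsDimLE {d : ℕ} (hd : 1 ≤ d) {β : ℝ} (hβ : 0 < β) (hβ3 : β ≤ 1 / 3)
    {n : ℕ} (hn : 1 ≤ n) (hpow : d / β ≤ (n : ℝ) ^ β) (hlin : d / β ≤ n) :
    (n : ℝ) ^ ((1 - 3 * β) * d * n) ≤ numPosetsDimLE d n := by
  have hn' : (1 : ℝ) ≤ n := by exact_mod_cast hn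
  have hd' : (0 : ℝ) < d := by exact_mod_cast hd
  set k := ⌈β * n / d⌉₊
  have hk_ge : β * n / d ≤ k := Nat.le_ceil _
  have hk_lt : (k : ℝ) < β * n / d + 1 := Nat.ceil_lt_add_one (by positivity)
  have hdk : (d : ℝ) * k ≤ 2 * β * n := by
    rw [div_le_iff₀ hβ] at hlin
    have := mul_lt_mul_of_pos_left hk_lt hd'
    rw [mul_add, mul_div_cancel₀ _ hd'.ne'] at this
    linarith
  have hdk_le : d * k ≤ n := by
    have : ((d * k : ℕ) : ℝ) ≤ n := by push_cast; nlinarith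
    exact_mod_cast this
  have hm : (1 - 2 * β) * n ≤ (n : ℝ) - d * k := by linarith
  have hk_rpow : (n : ℝ) ^ (1 - β) ≤ k := by
    rw [Real.rpow_sub (by positivity), Real.rpow_one, div_le_iff₀ (by positivity)]
    calc (n : ℝ) = β * n / d * (d / β) := by field_simp
      _ ≤ k * (n : ℝ) ^ β := mul_le_mul hk_ge hpow (by positivity) (by positivity)
  calc (n : ℝ) ^ ((1 - 3 * β) * d * n)
      ≤ (n : ℝ) ^ ((1 - β) * ((d * (n - d * k) : ℕ) : ℝ)) := by
        refine Real.rpow_le_rpow_of_exponent_le hn' ?_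
        push_cast [Nat.cast_sub hdk_le]
        have hβd : (0 : ℝ) ≤ (1 - β) * d := mul_nonneg (by linarith) hd'.le
        nlinarith [mul_le_mul_of_nonneg_left hm hβd,
          mul_nonneg (mul_nonneg (sq_nonneg β) hd'.le) (n.cast_nonneg : (0 : ℝ) ≤ n)]
    _ = ((n : ℝ) ^ (1 - β)) ^ (d * (n - d * k)) := by
        rw [Real.rpow_mul (by positivity), Real.rpow_natCast]
    _ ≤ (k : ℝ) ^ (d * (n - d * k)) := pow_le_pow_left₀ (by positivity) hk_rpow _
    _ ≤ numPosetsDimLE d n := by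
        exact_mod_cast pow_le_numPosetsDimLE hd (Nat.add_sub_cancel' hdk_le)

lemma eventually_rpow_le_numPosetsDimLE {d : ℕ} (hd : 1 ≤ d) {ε : ℝ} (hε : 0 < ε) :
    ∀ᶠ n : ℕ in atTop, (n : ℝ) ^ (((d : ℝ) - ε) * n) ≤ numPosetsDimLE d n := by
  have hd' : (0 : ℝ) < d := by exact_mod_cast hd
  wlog hεd : ε ≤ d generalizing ε
  · filter_upwards [this hd' le_rfl, eventually_ge_atTop 1] with n h hn
    refine le_trans (Real.rpow_le_rpow_of_exponent_le (by exact_mod_cast hn) ?_) h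
    nlinarith [(n.cast_nonneg : (0 : ℝ) ≤ n)]
  have hβ : 0 < ε / (3 * d) := by positivity
  have hβ3 : ε / (3 * d) ≤ 1 / 3 := by
    rw [div_le_iff₀ (by positivity)]
    linarith
  filter_upwards [((tendsto_rpow_atTop hβ).comp tendsto_natCast_atTop_atTop).eventually_ge_atTop
      ((d : ℝ) / (ε / (3 * d))), tendsto_natCast_atTop_atTop.eventually_ge_atTop
      ((d : ℝ) / (ε / (3 * d))), eventually_ge_atTop 1] with n hpow hlin hn
  convert rpow_le_numPosetsDimLE hd hβ hβ3 hn hpow hlin using 2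
  field_simp

/-- **Corollary 2.12 (Alon–Scheinerman).** For every fixed `d ≥ 1`, the number of
partial orders on `{1,…,n}` of order dimension at most `d` equals `n^{(d+o(1))n}`:
for every `ε > 0` it is eventually between `n^{(d-ε)n}` and `n^{(d+ε)n}`. -/
theorem count_posets_of_dim_le (d : ℕ) (hd : 1 ≤ d) :
    ∀ ε : ℝ, 0 < ε → ∃ N : ℕ, ∀ n : ℕ, N ≤ n →
      (n : ℝ) ^ (((d : ℝ) - ε) * n) ≤ (numPosetsDimLE d n : ℝ) ∧
      (numPosetsDimLE d n : ℝ) ≤ (n : ℝ) ^ (((d : ℝ) + ε) * n) := by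
  intro ε hε
  obtain ⟨N, hN⟩ :=
    eventually_atTop.1 ((eventually_rpow_le_numPosetsDimLE hd hε).and (eventually_ge_atTop 1))
  exact ⟨N, fun n hn => ⟨(hN n hn).1, numPosetsDimLE_le_rpow d hε.le (hN n hn).2⟩⟩
end

section
/- Let P(x,y,r,x',y',r') = (x−x')² + (y−y')² − (r+r')² and U = {(x,y,r) ∈ ℝ³ : r > 0}. For any two distinct points a = (x,y,r) and a' = (x',y',r') in U, there exists b = (x*,y*,r*) ∈ U such that P(a,b) ≠ 0, P(a',b) ≠ 0, and exactly one of P(a,b) < 0 and P(a',b) < 0 holds. -/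
/-! Identify the plane with `ℂ`, so that `P(a, b) < 0` says `dist a b < r + r*` and `P(a, b) > 0`
says `dist a b > r + r*`. If `r' < d + r`, where `d` is the distance of the centres, a disk
through the point of the first circle farthest from the second centre, of radius
`(d + r - r') / 2`, meets the first disk and stays strictly away from the second. If neither
`r' < d + r` nor `r < d + r'`, then `d = 0` and `r = r'`, so the disks coincide. -/

section NormedSpace

variable {E : Type*} [NormedAddCommGroup E] [NormedSpace ℝ E] [Nontrivial E]

lemma exists_norm_eq_sameRay (v : E) {r : ℝ} (hr : 0 ≤ r) :
    ∃ u : E, ‖u‖ = r ∧ SameRay ℝ v u := by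
  by_cases hv : v = 0
  · obtain ⟨u, hu⟩ := exists_norm_eq E hr
    exact ⟨u, hu, hv ▸ SameRay.zero_left u⟩
  · refine ⟨(r / ‖v‖) • v, ?_, SameRay.sameRay_nonneg_smul_right v (by positivity)⟩
    rw [norm_smul, Real.norm_of_nonneg (by positivity),
      div_mul_cancel₀ _ (norm_ne_zero_iff.mpr hv)]

lemma exists_dist_eq_and_dist_eq_dist_add (c c' : E) {r : ℝ} (hr : 0 ≤ r) :
    ∃ p : E, dist p c = r ∧ dist p c' = dist c c' + r := by
  obtain ⟨u, hu, hsame⟩ := exists_norm_eq_sameRay (c - c') hr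
  refine ⟨c + u, by rw [dist_eq_norm, add_sub_cancel_left, hu], ?_⟩
  rw [dist_eq_norm, dist_eq_norm, ← hu, ← hsame.norm_add, add_sub_right_comm]

lemma exists_dist_lt_add_and_add_lt_dist {c c' : E} {r r' : ℝ} (hr : 0 ≤ r)
    (h : r' < dist c c' + r) :
    ∃ p : E, ∃ s : ℝ, 0 < s ∧ dist p c < r + s ∧ r' + s < dist p c' := by
  obtain ⟨p, hpc, hpc'⟩ := exists_dist_eq_and_dist_eq_dist_add c c' hr
  exact ⟨p, (dist c c' + r - r') / 2, by linarith, by linarith, by linarith⟩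

lemma exists_ball_separating {c c' : E} {r r' : ℝ} (hr : 0 ≤ r) (hr' : 0 ≤ r')
    (hne : (c, r) ≠ (c', r')) :
    ∃ p : E, ∃ s : ℝ, 0 < s ∧
      (dist p c < r + s ∧ r' + s < dist p c' ∨ dist p c' < r' + s ∧ r + s < dist p c) := by
  by_cases h : r' < dist c c' + r
  · obtain ⟨p, s, hs, h₁, h₂⟩ := exists_dist_lt_add_and_add_lt_dist hr h
    exact ⟨p, s, hs, .inl ⟨h₁, h₂⟩⟩
  · have h' : r < dist c' c + r' := by
      by_contra h'
      have hd : dist c c' = 0 := by linarith [dist_nonneg (x := c) (y := c'), dist_comm c c']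
      exact hne (Prod.ext (dist_eq_zero.mp hd) (by linarith [dist_comm c c']))
    obtain ⟨p, s, hs, h₁, h₂⟩ := exists_dist_lt_add_and_add_lt_dist hr' h'
    exact ⟨p, s, hs, .inr ⟨h₁, h₂⟩⟩

end NormedSpace

lemma Complex.dist_sq_eq (z w : ℂ) :
    dist z w ^ 2 = (z.re - w.re) ^ 2 + (z.im - w.im) ^ 2 := by
  rw [Complex.dist_eq_re_im, Real.sq_sqrt (by positivity)]

lemma sq_sub_sq_neg_of_lt {a b : ℝ} (ha : 0 ≤ a) (h : a < b) : a ^ 2 - b ^ 2 < 0 :=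
  sub_neg.mpr (pow_lt_pow_left₀ h ha two_ne_zero)

lemma sq_sub_sq_pos_of_lt {a b : ℝ} (hb : 0 ≤ b) (h : b < a) : 0 < a ^ 2 - b ^ 2 :=
  sub_pos.mpr (pow_lt_pow_left₀ h hb two_ne_zero)

/-- **Separating disk condition** (Section 2.1). Let
`P(x,y,r,x*,y*,r*) = (x-x*)² + (y-y*)² - (r+r*)²` and
`U = {(x,y,r) : r > 0}`. For any two distinct points `(x,y,r), (x',y',r') ∈ U` there
is `(x*,y*,r*) ∈ U` with `P((x,y,r),(x*,y*,r*)) ≠ 0`, `P((x',y',r'),(x*,y*,r*)) ≠ 0`,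
and exactly one of `P((x,y,r),(x*,y*,r*)) < 0` and `P((x',y',r'),(x*,y*,r*)) < 0`:
there is an open disk intersecting exactly one of two given distinct open disks,
tangent to neither. -/
theorem separating_disk_exists (x y r x' y' r' : ℝ) (hr : 0 < r) (hr' : 0 < r')
    (hne : (x, y, r) ≠ (x', y', r')) :
    ∃ xs ys rs : ℝ, 0 < rs ∧
      (x - xs) ^ 2 + (y - ys) ^ 2 - (r + rs) ^ 2 ≠ 0 ∧
      (x' - xs) ^ 2 + (y' - ys) ^ 2 - (r' + rs) ^ 2 ≠ 0 ∧
      Xor' ((x - xs) ^ 2 + (y - ys) ^ 2 - (r + rs) ^ 2 < 0)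
        ((x' - xs) ^ 2 + (y' - ys) ^ 2 - (r' + rs) ^ 2 < 0) := by
  obtain ⟨p, s, hs, hsep⟩ := exists_ball_separating (c := (⟨x, y⟩ : ℂ)) (c' := ⟨x', y'⟩)
    hr.le hr'.le (by simpa [Complex.ext_iff] using hne)
  refine ⟨p.re, p.im, s, hs, ?_⟩
  rw [← Complex.dist_sq_eq ⟨x, y⟩ p, ← Complex.dist_sq_eq ⟨x', y'⟩ p, dist_comm _ p,
    dist_comm _ p]
  rcases hsep with ⟨h₁, h₂⟩ | ⟨h₁, h₂⟩
  · have hneg := sq_sub_sq_neg_of_lt dist_nonneg h₁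
    have hpos := sq_sub_sq_pos_of_lt (by positivity) h₂
    exact ⟨hneg.ne, hpos.ne', .inl ⟨hneg, hpos.not_gt⟩⟩
  · have hneg := sq_sub_sq_neg_of_lt dist_nonneg h₁
    have hpos := sq_sub_sq_pos_of_lt (by positivity) h₂
    exact ⟨hpos.ne', hneg.ne, .inr ⟨hneg, hpos.not_gt⟩⟩
end

section
/- Let U ⊆ ℝᵈ be open, let Q, R ∈ ℝ[y₁,…,y_d] be coprime nonconstant polynomials whose common zero set Z = {y ∈ ℝᵈ : Q(y) = R(y) = 0} is a real algebraic set of dimension at most d − 2, let U' ⊆ ℝᵈ be an open ball, and let f : U' → ℝ be a continuous function such that Q(b') = R(b') = 0 for every b' ∈ U' with f(b') = 0. If there exist b⁺, b⁻ ∈ U' with f(b⁺) > 0, Q(b⁺) ≠ 0, f(b⁻) < 0 and Q(b⁻) ≠ 0, then a contradiction arises; i.e., no such b⁺, b⁻ can both exist. -/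
/-!
Coprime `Q` and `R` have a common zero set `Z` that generic lines avoid. For a direction `w`,
the polynomials `Q(u + t • w)` and `R(u + t • w)` in `ℝ[u][t]` are the images of `Q` and `R`
under a ring automorphism, so they stay coprime; by Gauss's lemma they are coprime in
`ℝ(u)[t]`, and clearing denominators in a Bézout identity yields a nonzero `g(u)` vanishing at
every `u` whose line meets `Z`. Small `Z`-free balls around `b⁺` and `b⁻` can therefore be
joined by a segment in direction `b⁻ - b⁺` missing `Z`, so the ball minus `Z` is preconnected,
and the intermediate value theorem gives a zero of `f` outside `Z`.
-/

/-- The vanishing ideal `I(V)` of a subset `V ⊆ ℝ^σ`. -/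
noncomputable def vanishingIdeal {σ : Type} (V : Set (σ → ℝ)) :
    Ideal (MvPolynomial σ ℝ) where
  carrier := {Q | ∀ x ∈ V, MvPolynomial.eval x Q = 0}
  add_mem' := by
    intro a b ha hb x hx
    simp [map_add, ha x hx, hb x hx]
  zero_mem' := by
    intro x hx
    simp
  smul_mem' := by
    intro c q hq x hx
    simp [smul_eq_mul, hq x hx]

/-- The dimension of a real algebraic set: the Krull dimension of the quotient of the
polynomial ring by the vanishing ideal (`⊥` for the empty set). -/
noncomputable def algSetDim {σ : Type} (V : Set (σ → ℝ)) : WithBot ℕ∞ :=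
  ringKrullDim (MvPolynomial σ ℝ ⧸ vanishingIdeal V)

open Polynomial

theorem Polynomial.isRelPrime_C {R : Type*} [CommRing R] [IsDomain R] {a b : R}
    (h : IsRelPrime a b) : IsRelPrime (C a) (C b) := by
  wlog ha : a ≠ 0 generalizing a b
  · exact (this h.symm (h.ne_zero_or_ne_zero.resolve_left ha)).symm
  intro d hda hdb
  have hd : d = C (d.coeff 0) := eq_C_of_natDegree_eq_zero <| Nat.le_zero.mp <|
    (natDegree_le_of_dvd hda (C_ne_zero.mpr ha)).trans_eq (natDegree_C a)
  rw [hd, C_dvd_iff_dvd_coeff] at hda hdb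
  rw [hd]
  exact (h (by simpa using hda 0) (by simpa using hdb 0)).map C

section FractionField

variable {R K : Type*} [CommRing R] [IsDomain R] [Field K] [Algebra R K] [IsFractionRing R K]

theorem Polynomial.exists_isPrimitive_associated_map [IsGCDMonoid R] {p : K[X]} (hp : p ≠ 0) :
    ∃ q : R[X], q.IsPrimitive ∧ Associated (q.map (algebraMap R K)) p := by
  let : NormalizedGCDMonoid R := Classical.arbitrary _
  set q := IsLocalization.integerNormalization (nonZeroDivisors R) p
  obtain ⟨b, hb, hqp⟩ := IsLocalization.integerNormalization_spec (nonZeroDivisors R) p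
  have hq : q ≠ 0 := fun h => hp (IsFractionRing.integerNormalization_eq_zero_iff.mp h)
  have hunit : ∀ r : R, r ≠ 0 → IsUnit (C (algebraMap R K r)) := fun r hr =>
    isUnit_C.mpr (IsFractionRing.to_map_ne_zero_of_mem_nonZeroDivisors
      (mem_nonZeroDivisors_of_ne_zero hr)).isUnit
  refine ⟨q.primPart, q.isPrimitive_primPart, ?_⟩
  have key : C (algebraMap R K q.content) * q.primPart.map (algebraMap R K) =
      C (algebraMap R K b) * p := by
    rw [← Polynomial.map_C, ← Polynomial.map_mul, ← q.eq_C_content_mul_primPart, hqp,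
      Algebra.smul_def, algebraMap_apply]
  exact (associated_unit_mul_left _ _ (hunit _ (content_eq_zero_iff.not.mpr hq))).symm.trans
    (key ▸ associated_unit_mul_left _ _ (hunit _ (nonZeroDivisors.ne_zero hb)))

theorem IsRelPrime.isCoprime_map_of_isFractionRing [IsGCDMonoid R] {p q : R[X]}
    (h : IsRelPrime p q) : IsCoprime (p.map (algebraMap R K)) (q.map (algebraMap R K)) := by
  have hinj := map_injective (algebraMap R K) (IsFractionRing.injective R K)
  rw [← isRelPrime_iff_isCoprime]
  intro z hzp hzq
  have hz : z ≠ 0 := by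
    rintro rfl
    rcases h.ne_zero_or_ne_zero with hp | hq
    · exact hp (hinj (by simpa using zero_dvd_iff.mp hzp))
    · exact hq (hinj (by simpa using zero_dvd_iff.mp hzq))
  obtain ⟨z₀, hz₀, hassoc⟩ := exists_isPrimitive_associated_map (R := R) hz
  have hunit := h (hz₀.dvd_of_fraction_map_dvd_fraction_map (hassoc.dvd.trans hzp))
    (hz₀.dvd_of_fraction_map_dvd_fraction_map (hassoc.dvd.trans hzq))
  exact hassoc.isUnit (hunit.map (mapRingHom (algebraMap R K)))

theorem Polynomial.exists_mul_add_mul_eq_C_of_isCoprime_map {p q : R[X]}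
    (h : IsCoprime (p.map (algebraMap R K)) (q.map (algebraMap R K))) :
    ∃ (g : R) (a b : R[X]), g ≠ 0 ∧ a * p + b * q = C g := by
  obtain ⟨a, b, hab⟩ := h
  obtain ⟨c, hc, hca⟩ := IsLocalization.integerNormalization_spec (nonZeroDivisors R) a
  obtain ⟨d, hd, hdb⟩ := IsLocalization.integerNormalization_spec (nonZeroDivisors R) b
  refine ⟨c * d, C d * IsLocalization.integerNormalization (nonZeroDivisors R) a,
    C c * IsLocalization.integerNormalization (nonZeroDivisors R) b,
    mul_ne_zero (nonZeroDivisors.ne_zero hc) (nonZeroDivisors.ne_zero hd), ?_⟩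
  apply map_injective (algebraMap R K) (IsFractionRing.injective R K)
  simp only [Polynomial.map_add, Polynomial.map_mul, Polynomial.map_C, hca, hdb,
    Algebra.smul_def, algebraMap_apply, map_mul]
  linear_combination C (algebraMap R K c) * C (algebraMap R K d) * hab

end FractionField

namespace MvPolynomial

def commonZeros {σ k : Type*} [CommSemiring k] (p q : MvPolynomial σ k) : Set (σ → k) :=
  {y | eval y p = 0 ∧ eval y q = 0}

theorem isClosed_commonZeros {σ k : Type*} [CommSemiring k] [TopologicalSpace k]
    [IsTopologicalSemiring k] [T1Space k] (p q : MvPolynomial σ k) :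
    IsClosed (commonZeros p q) :=
  (isClosed_singleton.preimage (continuous_eval p)).inter
    (isClosed_singleton.preimage (continuous_eval q))

variable {σ k : Type*} [Field k]

/-- The substitution `p(u, t) ↦ p(u + t • w, t)` on `k[u][t]`. -/
noncomputable def lineShiftHom (w : σ → k) : (MvPolynomial σ k)[X] →+* (MvPolynomial σ k)[X] :=
  eval₂RingHom (eval₂Hom (Polynomial.C.comp C)
    fun i => Polynomial.C (X i) + Polynomial.C (C (w i)) * Polynomial.X) Polynomial.X

theorem lineShiftHom_comp (v w : σ → k) :
    (lineShiftHom v).comp (lineShiftHom w) = lineShiftHom (v + w) := by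
  refine Polynomial.ringHom_ext' (MvPolynomial.ringHom_ext (fun r => ?_) (fun i => ?_)) ?_ <;>
    simp [lineShiftHom]
  ring

theorem lineShiftHom_zero : lineShiftHom (0 : σ → k) = RingHom.id _ := by
  refine Polynomial.ringHom_ext' (MvPolynomial.ringHom_ext (fun r => ?_) (fun i => ?_)) ?_ <;>
    simp [lineShiftHom]

noncomputable def lineShift (w : σ → k) : (MvPolynomial σ k)[X] ≃+* (MvPolynomial σ k)[X] :=
  .ofRingHom (lineShiftHom w) (lineShiftHom (-w))
    (by rw [lineShiftHom_comp, add_neg_cancel, lineShiftHom_zero])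
    (by rw [lineShiftHom_comp, neg_add_cancel, lineShiftHom_zero])

theorem lineShift_apply (w : σ → k) (p : (MvPolynomial σ k)[X]) :
    lineShift w p = lineShiftHom w p := rfl

theorem eval₂_lineShift_C (w u : σ → k) (t : k) (p : MvPolynomial σ k) :
    (lineShift w (Polynomial.C p)).eval₂ (eval u) t = eval (u + t • w) p := by
  rw [lineShift_apply, ← coe_eval₂RingHom, ← RingHom.comp_apply, ← RingHom.comp_apply]
  congr 1
  refine MvPolynomial.ringHom_ext (fun r => ?_) (fun i => ?_)
  · simp [lineShiftHom]
  · simp [lineShiftHom]; ring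

theorem _root_.IsRelPrime.exists_ne_zero_eval_eq_zero_of_line {Q R : MvPolynomial σ k}
    (h : IsRelPrime Q R) (w : σ → k) :
    ∃ g : MvPolynomial σ k, g ≠ 0 ∧
      ∀ (u : σ → k) (t : k), u + t • w ∈ commonZeros Q R → eval u g = 0 := by
  have hrel : IsRelPrime (lineShift w (.C Q)) (lineShift w (.C R)) :=
    IsRelPrime.of_map (lineShift w).symm (by simpa using isRelPrime_C h)
  obtain ⟨g, a, b, hg, hab⟩ := exists_mul_add_mul_eq_C_of_isCoprime_map
    (K := FractionRing (MvPolynomial σ k)) hrel.isCoprime_map_of_isFractionRing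
  refine ⟨g, hg, fun u t ⟨hQ, hR⟩ => ?_⟩
  have hev := congrArg (eval₂RingHom (eval u) t) hab
  simpa [eval₂_lineShift_C, hQ, hR] using hev.symm

theorem exists_eval_ne_zero_of_isOpen {𝕜 : Type*} [RCLike 𝕜] [Fintype σ]
    {p : MvPolynomial σ 𝕜} (hp : p ≠ 0) {s : Set (σ → 𝕜)} (hs : IsOpen s) (hne : s.Nonempty) :
    ∃ x ∈ s, eval x p ≠ 0 := by
  by_contra! hzero
  obtain ⟨x₀, hx₀⟩ := hne
  have hvanish :=
    (AnalyticOnNhd.eval_mvPolynomial p).eqOn_zero_of_preconnected_of_eventuallyEq_zero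
      isPreconnected_univ (Set.mem_univ x₀)
      (Filter.eventually_of_mem (hs.mem_nhds hx₀) hzero)
  exact hp (MvPolynomial.funext fun x => by simpa using hvanish (Set.mem_univ x))

end MvPolynomial

open MvPolynomial Metric Set

section Real

variable {σ : Type*} [Fintype σ] {Q R : MvPolynomial σ ℝ}

theorem IsRelPrime.exists_isPreconnected_subset_diff_commonZeros (h : IsRelPrime Q R)
    {s : Set (σ → ℝ)} (hs : IsOpen s) (hsc : Convex ℝ s) {a b : σ → ℝ}
    (ha : a ∈ s \ commonZeros Q R) (hb : b ∈ s \ commonZeros Q R) :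
    ∃ W ⊆ s \ commonZeros Q R, a ∈ W ∧ b ∈ W ∧ IsPreconnected W := by
  obtain ⟨g, hg, hline⟩ := h.exists_ne_zero_eval_eq_zero_of_line (b - a)
  have hopen : IsOpen (s \ commonZeros Q R) := hs.sdiff (isClosed_commonZeros Q R)
  obtain ⟨ε, hε, haε, hbε⟩ :
      ∃ ε > 0, ball a ε ⊆ s \ commonZeros Q R ∧ ball b ε ⊆ s \ commonZeros Q R := by
    obtain ⟨ε₁, h₁, ha₁⟩ := Metric.isOpen_iff.mp hopen a ha
    obtain ⟨ε₂, h₂, hb₂⟩ := Metric.isOpen_iff.mp hopen b hb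
    exact ⟨min ε₁ ε₂, lt_min h₁ h₂, (ball_subset_ball (min_le_left _ _)).trans ha₁,
      (ball_subset_ball (min_le_right _ _)).trans hb₂⟩
  obtain ⟨u, hu, hgu⟩ := exists_eval_ne_zero_of_isOpen hg isOpen_ball ⟨a, mem_ball_self hε⟩
  have hu' : u + (b - a) ∈ ball b ε := by
    rwa [mem_ball, dist_eq_norm, show u + (b - a) - b = u - a by abel, ← dist_eq_norm]
  have hseg : segment ℝ u (u + (b - a)) ⊆ s \ commonZeros Q R := by
    intro y hy
    refine ⟨hsc.segment_subset (haε hu).1 (hbε hu').1 hy, fun hyZ => hgu ?_⟩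
    rw [segment_eq_image'] at hy
    obtain ⟨t, -, rfl⟩ := hy
    exact hline u t (by simpa using hyZ)
  refine ⟨ball a ε ∪ segment ℝ u (u + (b - a)) ∪ ball b ε,
    union_subset (union_subset haε hseg) hbε, .inl (.inl (mem_ball_self hε)),
    .inr (mem_ball_self hε), ?_⟩
  exact ((convex_ball a ε).isPreconnected.union u hu (left_mem_segment ℝ _ _)
    (convex_segment _ _).isPreconnected).union (u + (b - a)) (.inr (right_mem_segment ℝ _ _))
    hu' (convex_ball b ε).isPreconnected

theorem IsRelPrime.isPreconnected_diff_commonZeros (h : IsRelPrime Q R) {s : Set (σ → ℝ)}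
    (hs : IsOpen s) (hsc : Convex ℝ s) : IsPreconnected (s \ commonZeros Q R) :=
  isPreconnected_of_forall_pair fun _ ha _ hb =>
    h.exists_isPreconnected_subset_diff_commonZeros hs hsc ha hb

end Real

theorem no_sign_change_avoiding_common_zeros_general (d : ℕ)
    (Q R : MvPolynomial (Fin d) ℝ)
    (hcop : ∀ S : MvPolynomial (Fin d) ℝ, S ∣ Q → S ∣ R → IsUnit S)
    (c : Fin d → ℝ) (ρ : ℝ) (U' : Set (Fin d → ℝ)) (hU' : U' = Metric.ball c ρ)
    (f : (Fin d → ℝ) → ℝ) (hf : ContinuousOn f U')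
    (hzero : ∀ b' ∈ U', f b' = 0 →
      MvPolynomial.eval b' Q = 0 ∧ MvPolynomial.eval b' R = 0) :
    ¬ ∃ bp bm : Fin d → ℝ, bp ∈ U' ∧ bm ∈ U' ∧
        0 < f bp ∧ MvPolynomial.eval bp Q ≠ 0 ∧
        f bm < 0 ∧ MvPolynomial.eval bm Q ≠ 0 := by
  rintro ⟨bp, bm, hbp, hbm, hfp, hQp, hfm, hQm⟩
  subst hU'
  have hconn : IsPreconnected (ball c ρ \ commonZeros Q R) :=
    IsRelPrime.isPreconnected_diff_commonZeros (fun S => hcop S) isOpen_ball (convex_ball c ρ)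
  obtain ⟨z, ⟨hz, hzZ⟩, hfz⟩ := hconn.intermediate_value ⟨hbm, fun h => hQm h.1⟩
    ⟨hbp, fun h => hQp h.1⟩ (hf.mono sdiff_subset) ⟨hfm.le, hfp.le⟩
  exact hzZ (hzero z hz hfz)

/-- **Intermediate-value step in Lemma 6.3.** Let `U ⊆ ℝ^d` be open, let `Q, R` be
coprime nonconstant polynomials whose common zero set `Z` has dimension at most `d-2`,
let `U'` be an open ball and `f : U' → ℝ` continuous with `Q(b') = R(b') = 0` whenever
`b' ∈ U'` and `f(b') = 0`. Then there cannot exist `b⁺, b⁻ ∈ U'` with `f(b⁺) > 0`,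
`Q(b⁺) ≠ 0`, `f(b⁻) < 0` and `Q(b⁻) ≠ 0`. -/
theorem no_sign_change_avoiding_common_zeros (d : ℕ) (U : Set (Fin d → ℝ))
    (hUopen : IsOpen U)
    (Q R : MvPolynomial (Fin d) ℝ)
    (hQdeg : 0 < Q.totalDegree) (hRdeg : 0 < R.totalDegree)
    (hcop : ∀ S : MvPolynomial (Fin d) ℝ, S ∣ Q → S ∣ R → IsUnit S)
    (hdim : algSetDim {y : Fin d → ℝ |
        MvPolynomial.eval y Q = 0 ∧ MvPolynomial.eval y R = 0} ≤ ((d - 2 : ℕ) : ℕ∞))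
    (c : Fin d → ℝ) (ρ : ℝ) (U' : Set (Fin d → ℝ)) (hU' : U' = Metric.ball c ρ)
    (f : (Fin d → ℝ) → ℝ) (hf : ContinuousOn f U')
    (hzero : ∀ b' ∈ U', f b' = 0 →
      MvPolynomial.eval b' Q = 0 ∧ MvPolynomial.eval b' R = 0) :
    ¬ ∃ bp bm : Fin d → ℝ, bp ∈ U' ∧ bm ∈ U' ∧
        0 < f bp ∧ MvPolynomial.eval bp Q ≠ 0 ∧
        f bm < 0 ∧ MvPolynomial.eval bm Q ≠ 0 :=
  no_sign_change_avoiding_common_zeros_general d Q R hcop c ρ U' hU' f hf hzero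
end
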